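/- In the Hamming Hamster-Wheel setting with r ∈ [1, m−1], the r-modification |' of the modified operator | satisfies |' = |_{D'}, i.e. V |' W = V |_{D'} W for all V, W ⊆ 𝒱, where D' is the r-modification of the Hamming Hamster-Wheel pseudo-distance D. -/

import Mathlib

/-- `lt` is a strict total order on `C`. -/
def StrictTotalOrder' {C : Type*} (lt : C → C → Prop) : Prop :=
  (∀ c, ¬ lt c c) ∧ (∀ a b c, lt a b → lt b c → lt a c) ∧
  (∀ a b, a ≠ b → lt a b ∨ lt b a)

/-- The operator induced by a pseudo-distance `⟨C, lt, d⟩`. -/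
def inducedOp {𝒱 C : Type*} (lt : C → C → Prop) (d : 𝒱 → 𝒱 → C)
    (A B : Set 𝒱) : Set 𝒱 :=
  {w ∈ B | ∃ v ∈ A, ∀ v' ∈ A, ∀ w' ∈ B, lt (d v w) (d v' w') ∨ d v w = d v' w'}

/-- The set of atoms on which two valuations differ. -/
def hamSet {𝒜 T : Type*} (v w : 𝒜 → T) : Set 𝒜 := {p | v p ≠ w p}

open Classical in
/-- The valuation assigning `t1` to the atom `a0` and `t0` to every other atom. -/
noncomputable def unitVal {𝒜 T : Type*} (t0 t1 : T) (a0 : 𝒜) : 𝒜 → T :=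
  fun a => if a = a0 then t1 else t0

/-- The atoms `p 1, …, p m, q 1, …, q m` are `2m` pairwise distinct atoms. -/
def hamDistinctAtoms {𝒜 : Type*} (m : ℕ) (p q : ℕ → 𝒜) : Prop :=
  (∀ i ∈ Set.Icc 1 m, ∀ j ∈ Set.Icc 1 m, p i ≠ q j) ∧
  (∀ i ∈ Set.Icc 1 m, ∀ j ∈ Set.Icc 1 m, p i = p j → i = j) ∧
  (∀ i ∈ Set.Icc 1 m, ∀ j ∈ Set.Icc 1 m, q i = q j → i = j)

/-- `X = {v 1, …, v m, w 1, …, w m}`, where `v i = unitVal t0 t1 (p i)` and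
`w i = unitVal t0 t1 (q i)`. -/
noncomputable def hamX {𝒜 T : Type*} (m : ℕ) (p q : ℕ → 𝒜) (t0 t1 : T) : Set (𝒜 → T) :=
  {x | ∃ i ∈ Set.Icc 1 m, x = unitVal t0 t1 (p i) ∨ x = unitVal t0 t1 (q i)}

open Classical in
/-- The Hamming Hamster-Wheel pseudo-distance, with costs in `ℝ ∪ {∞}` (`WithTop ℝ`). -/
noncomputable def hamD {𝒜 T : Type*} (m : ℕ) (p q : ℕ → 𝒜) (t0 t1 : T)
    (a b : 𝒜 → T) : WithTop ℝ :=
  if a = b then 0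
  else if ({a, b} : Set (𝒜 → T)) ⊆ hamX m p q t0 t1 then
    (if (∃ i ∈ Set.Icc 1 m, ∃ j ∈ Set.Icc 1 m,
          a = unitVal t0 t1 (p i) ∧ b = unitVal t0 t1 (p j)) ∨
        (∃ i ∈ Set.Icc 1 m, ∃ j ∈ Set.Icc 1 m,
          a = unitVal t0 t1 (q i) ∧ b = unitVal t0 t1 (q j)) then ((2.1 : ℝ) : WithTop ℝ)
     else if ∃ i ∈ Set.Icc 1 m,
          ({a, b} : Set (𝒜 → T)) = {unitVal t0 t1 (p i), unitVal t0 t1 (q i)} then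
        ((2.4 : ℝ) : WithTop ℝ)
     else if ∃ i ∈ Set.Icc 1 m, ∃ j ∈ Set.Icc 1 m,
          ({a, b} : Set (𝒜 → T)) = {unitVal t0 t1 (p i), unitVal t0 t1 (q j)} ∧
          ((i : ℤ) - j).natAbs ∈ ({1, m - 1} : Set ℕ) then ((2.5 : ℝ) : WithTop ℝ)
     else ((2.2 : ℝ) : WithTop ℝ))
  else if (hamSet a b).Finite then
    (if (hamSet a b).ncard = 1 then ((1.4 : ℝ) : WithTop ℝ)
     else (((hamSet a b).ncard : ℝ) : WithTop ℝ))
  else ⊤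

open Classical in
/-- The modified Hamming Hamster-Wheel operator `|` on `𝒫(𝒱)`. -/
noncomputable def hamOp {𝒜 T : Type*} (m : ℕ) (p q : ℕ → 𝒜) (t0 t1 : T)
    (A B : Set (𝒜 → T)) : Set (𝒜 → T) :=
  if ∀ a ∈ A, ∀ b ∈ B, ({a, b} : Set (𝒜 → T)) ⊆ hamX m p q t0 t1 ∨
      (¬ (hamSet a b).Finite ∨ 3 ≤ (hamSet a b).ncard) then
    (if A ∩ hamX m p q t0 t1 = {unitVal t0 t1 (p m), unitVal t0 t1 (p 1)} ∧
        B ∩ hamX m p q t0 t1 = {unitVal t0 t1 (q m), unitVal t0 t1 (q 1)} then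
      {unitVal t0 t1 (q m)}
     else if A ∩ hamX m p q t0 t1 = {unitVal t0 t1 (q m), unitVal t0 t1 (q 1)} ∧
        B ∩ hamX m p q t0 t1 = {unitVal t0 t1 (p m), unitVal t0 t1 (p 1)} then
      {unitVal t0 t1 (p m)}
     else inducedOp (· < ·) (hamD m p q t0 t1) A B)
  else inducedOp (· < ·) (hamD m p q t0 t1) A B

open Classical in
/-- The `r`-modification `d'` of the Hamming Hamster-Wheel pseudo-distance. -/
noncomputable def hamD' {𝒜 T : Type*} (m : ℕ) (p q : ℕ → 𝒜) (t0 t1 : T) (r : ℕ)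
    (a b : 𝒜 → T) : WithTop ℝ :=
  if ∃ i ∈ Set.Icc (r + 1) m,
      ({a, b} : Set (𝒜 → T)) = {unitVal t0 t1 (p i), unitVal t0 t1 (q i)} then
    ((2.3 : ℝ) : WithTop ℝ)
  else hamD m p q t0 t1 a b

open Classical in
/-- The `r`-modification `|'` of the modified Hamming Hamster-Wheel operator. -/
noncomputable def hamOp' {𝒜 T : Type*} (m : ℕ) (p q : ℕ → 𝒜) (t0 t1 : T) (r : ℕ)
    (A B : Set (𝒜 → T)) : Set (𝒜 → T) :=
  if ∀ a ∈ A, ∀ b ∈ B, ({a, b} : Set (𝒜 → T)) ⊆ hamX m p q t0 t1 ∨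
      (¬ (hamSet a b).Finite ∨ 3 ≤ (hamSet a b).ncard) then
    (if A ∩ hamX m p q t0 t1 = {unitVal t0 t1 (p r), unitVal t0 t1 (p (r + 1))} ∧
        B ∩ hamX m p q t0 t1 = {unitVal t0 t1 (q r), unitVal t0 t1 (q (r + 1))} then
      {unitVal t0 t1 (q (r + 1))}
     else if A ∩ hamX m p q t0 t1 = {unitVal t0 t1 (q r), unitVal t0 t1 (q (r + 1))} ∧
        B ∩ hamX m p q t0 t1 = {unitVal t0 t1 (p r), unitVal t0 t1 (p (r + 1))} then
      {unitVal t0 t1 (p (r + 1))}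
     else hamOp m p q t0 t1 A B)
  else hamOp m p q t0 t1 A B

/-!
The `r`-modification `d'` differs from `d` only on the pairs `{v i, w i}` with `r < i`, where it
lowers `2.4` to `2.3`. If some pair of `A × B` lies at `d`-distance below `2.3` (in particular
whenever the first case of `|` fails), the minimising pairs for `d` and `d'` coincide. Otherwise
every distance in `A × B` is at least `2.3`. If moreover `v j, v i ∈ A` and `w j, w i ∈ B` with
`j ≤ r < i`, then `d (v j) (w i) ≥ 2.3` makes `i` and `j` neighbours on the `m`-cycle, and the
distances `2.1` and `2.2` confine `A ∩ X` and `B ∩ X` to these four points. The cycle edges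
joining `[1, r]` to `[r + 1, m]` are `{r, r + 1}` and `{1, m}`, exactly the configurations on
which `|'` and `|` are overridden, and there `d'` has the unique minimising pair `(v i, w i)`. In
all remaining cases every pair at distance `2.4` is modified, so on `A × B` the cost `d'` is an
increasing function of `d`.
-/

section InducedOp

variable {𝒱 γ : Type*} [LinearOrder γ] {d e : 𝒱 → 𝒱 → γ} {A B : Set 𝒱}

theorem mem_inducedOp {b : 𝒱} :
    b ∈ inducedOp (· < ·) d A B ↔ b ∈ B ∧ ∃ a ∈ A, ∀ a' ∈ A, ∀ b' ∈ B, d a b ≤ d a' b' := by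
  simp only [inducedOp, Set.mem_sep_iff, le_iff_lt_or_eq]

theorem inducedOp_congr_of_le_iff
    (h : ∀ a ∈ A, ∀ b ∈ B, ∀ a' ∈ A, ∀ b' ∈ B, (d a b ≤ d a' b' ↔ e a b ≤ e a' b')) :
    inducedOp (· < ·) d A B = inducedOp (· < ·) e A B := by
  ext b
  simp only [mem_inducedOp]
  refine and_congr_right fun hb => exists_congr fun a => and_congr_right fun ha => ?_
  exact forall₂_congr fun a' ha' => forall₂_congr fun b' hb' => h a ha b hb a' ha' b' hb'

theorem inducedOp_congr (h : ∀ a ∈ A, ∀ b ∈ B, d a b = e a b) :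
    inducedOp (· < ·) d A B = inducedOp (· < ·) e A B :=
  inducedOp_congr_of_le_iff fun a ha b hb a' ha' b' hb' => by rw [h a ha b hb, h a' ha' b' hb']

theorem inducedOp_comp_of_strictMonoOn {g : γ → γ} (hg : StrictMonoOn g (Set.image2 d A B))
    (he : ∀ a ∈ A, ∀ b ∈ B, e a b = g (d a b)) :
    inducedOp (· < ·) e A B = inducedOp (· < ·) d A B :=
  inducedOp_congr_of_le_iff fun a ha b hb a' ha' b' hb' => by
    rw [he a ha b hb, he a' ha' b' hb']
    exact hg.le_iff_le (Set.mem_image2_of_mem ha hb) (Set.mem_image2_of_mem ha' hb')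

theorem inducedOp_subset_of_lt {c : γ} {a₀ b₀ : 𝒱} (ha₀ : a₀ ∈ A) (hb₀ : b₀ ∈ B)
    (hlt : d a₀ b₀ < c)
    (hne : ∀ a ∈ A, ∀ b ∈ B, d a b ≠ e a b → c ≤ d a b ∧ c ≤ e a b) :
    inducedOp (· < ·) d A B ⊆ inducedOp (· < ·) e A B := by
  intro b hb
  rw [mem_inducedOp] at hb ⊢
  obtain ⟨hbB, a, ha, hmin⟩ := hb
  have hab : d a b < c := (hmin a₀ ha₀ b₀ hb₀).trans_lt hlt
  have heq : d a b = e a b := by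
    by_contra h
    exact (hne a ha b hbB h).1.not_gt hab
  refine ⟨hbB, a, ha, fun a' ha' b' hb' => ?_⟩
  rw [← heq]
  by_cases h' : d a' b' = e a' b'
  · exact h' ▸ hmin a' ha' b' hb'
  · exact (hab.trans_le (hne a' ha' b' hb' h').2).le

theorem inducedOp_eq_of_lt {c : γ} {a₀ b₀ : 𝒱} (ha₀ : a₀ ∈ A) (hb₀ : b₀ ∈ B)
    (h₀ : d a₀ b₀ = e a₀ b₀) (hlt : d a₀ b₀ < c)
    (hne : ∀ a ∈ A, ∀ b ∈ B, d a b ≠ e a b → c ≤ d a b ∧ c ≤ e a b) :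
    inducedOp (· < ·) d A B = inducedOp (· < ·) e A B :=
  (inducedOp_subset_of_lt ha₀ hb₀ hlt hne).antisymm <|
    inducedOp_subset_of_lt ha₀ hb₀ (h₀ ▸ hlt) fun a ha b hb h =>
      (hne a ha b hb (Ne.symm h)).symm

theorem inducedOp_eq_singleton {c : γ} {a₀ b₀ : 𝒱} (ha₀ : a₀ ∈ A) (hb₀ : b₀ ∈ B)
    (h₀ : d a₀ b₀ = c) (hmin : ∀ a ∈ A, ∀ b ∈ B, c ≤ d a b ∧ (d a b = c → b = b₀)) :
    inducedOp (· < ·) d A B = {b₀} := by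
  ext b
  rw [mem_inducedOp, Set.mem_singleton_iff]
  constructor
  · rintro ⟨hb, a, ha, hab⟩
    exact (hmin a ha b hb).2 (le_antisymm (h₀ ▸ hab a₀ ha₀ b₀ hb₀) (hmin a ha b hb).1)
  · rintro rfl
    exact ⟨hb₀, a₀, ha₀, fun a' ha' b' hb' => h₀ ▸ (hmin a' ha' b' hb').1⟩

theorem strictMonoOn_ite_eq {x₀ y : γ} {s : Set γ} (hs : ∀ x ∈ s, x₀ ≤ x) (hy : y ≤ x₀) :
    StrictMonoOn (fun x => if x = x₀ then y else x) s := by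
  intro a ha b _ hab
  have hb : b ≠ x₀ := ((hs a ha).trans_lt hab).ne'
  dsimp only
  rw [if_neg hb]
  split_ifs with h
  · exact hy.trans_lt (h ▸ hab)
  · exact hab

end InducedOp

def CyclicAdj (m i j : ℕ) : Prop := ((i : ℤ) - j).natAbs = 1 ∨ ((i : ℤ) - j).natAbs = m - 1

section CyclicAdj

variable {m i j k r : ℕ}

instance : Decidable (CyclicAdj m i j) := inferInstanceAs (Decidable (_ ∨ _))

theorem cyclicAdj_iff_natAbs_mem :
    CyclicAdj m i j ↔ ((i : ℤ) - j).natAbs ∈ ({1, m - 1} : Set ℕ) := Iff.rfl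

theorem CyclicAdj.symm (h : CyclicAdj m i j) : CyclicAdj m j i := by
  rw [CyclicAdj] at *
  omega

theorem eq_or_eq_of_cyclicAdj (hm : 4 ≤ m) (hi : i ∈ Set.Icc 1 m) (hj : j ∈ Set.Icc 1 m)
    (hk : k ∈ Set.Icc 1 m) (hij : CyclicAdj m i j) (hki : k = i ∨ CyclicAdj m k i)
    (hkj : k = j ∨ CyclicAdj m k j) : k = i ∨ k = j := by
  simp only [CyclicAdj, Set.mem_Icc] at *
  omega

theorem cyclicAdj_crossing (hj : 1 ≤ j) (hjr : j ≤ r) (hri : r < i) (him : i ≤ m)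
    (h : CyclicAdj m j i) : j = r ∧ i = r + 1 ∨ j = 1 ∧ i = m := by
  rw [CyclicAdj] at h
  omega

end CyclicAdj

section Valuation

variable {𝒜 T : Type*} {t0 t1 : T}

theorem unitVal_injective (ht : t0 ≠ t1) : Function.Injective (unitVal (𝒜 := 𝒜) t0 t1) := by
  intro a b h
  by_contra hab
  simpa [unitVal, hab, Ne.symm ht] using congrFun h a

theorem hamSet_self (a : 𝒜 → T) : hamSet a a = ∅ := by
  ext
  simp [hamSet]

end Valuation

section Distance

variable {𝒜 T : Type*} {t0 t1 : T} {m r i j : ℕ} {p q : ℕ → 𝒜} {a b : 𝒜 → T}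

local notation "𝐯" i:max => unitVal t0 t1 (p i)
local notation "𝐰" i:max => unitVal t0 t1 (q i)
local notation "𝐗" => hamX m p q t0 t1

theorem hamDistinctAtoms.swap (h : hamDistinctAtoms m p q) : hamDistinctAtoms m q p :=
  ⟨fun i hi j hj => (h.1 j hj i hi).symm, h.2.2, h.2.1⟩

theorem p_mem_hamX (hi : i ∈ Set.Icc 1 m) : 𝐯 i ∈ 𝐗 := ⟨i, hi, .inl rfl⟩

theorem q_mem_hamX (hi : i ∈ Set.Icc 1 m) : 𝐰 i ∈ 𝐗 := ⟨i, hi, .inr rfl⟩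

theorem hamX_swap : hamX m q p t0 t1 = 𝐗 := by
  ext x
  simp only [hamX, Set.mem_ofPred_eq, or_comm]

theorem hamD_swap : hamD m q p t0 t1 = hamD m p q t0 t1 := by
  funext a b
  have h24 : (∃ i ∈ Set.Icc 1 m, ({a, b} : Set (𝒜 → T)) = {𝐰 i, 𝐯 i}) ↔
      ∃ i ∈ Set.Icc 1 m, ({a, b} : Set (𝒜 → T)) = {𝐯 i, 𝐰 i} :=
    exists_congr fun i => and_congr_right fun _ => by rw [Set.pair_comm (𝐰 i)]
  have h25 : (∃ i ∈ Set.Icc 1 m, ∃ j ∈ Set.Icc 1 m,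
        ({a, b} : Set (𝒜 → T)) = {𝐰 i, 𝐯 j} ∧ CyclicAdj m i j) ↔
      ∃ i ∈ Set.Icc 1 m, ∃ j ∈ Set.Icc 1 m,
        ({a, b} : Set (𝒜 → T)) = {𝐯 i, 𝐰 j} ∧ CyclicAdj m i j :=
    ⟨fun ⟨i, hi, j, hj, h, hij⟩ => ⟨j, hj, i, hi, h.trans (Set.pair_comm _ _), hij.symm⟩,
      fun ⟨i, hi, j, hj, h, hij⟩ => ⟨j, hj, i, hi, h.trans (Set.pair_comm _ _), hij.symm⟩⟩
  classical
  simp only [hamD, hamX_swap, h24, ← cyclicAdj_iff_natAbs_mem, h25, or_comm]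

theorem hamD'_swap : hamD' m q p t0 t1 r = hamD' m p q t0 t1 r := by
  funext a b
  classical
  unfold hamD'
  rw [hamD_swap]
  refine if_congr (exists_congr fun i => and_congr_right fun _ => ?_) rfl rfl
  rw [Set.pair_comm (𝐰 i)]

theorem unitVal_ne_of_hamDistinctAtoms (ht : t0 ≠ t1) (hd : hamDistinctAtoms m p q)
    (hi : i ∈ Set.Icc 1 m) (hj : j ∈ Set.Icc 1 m) : 𝐯 i ≠ 𝐰 j :=
  fun h => hd.1 i hi j hj (unitVal_injective ht h)

theorem pair_eq_pair_iff_of_hamDistinctAtoms (ht : t0 ≠ t1) (hd : hamDistinctAtoms m p q)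
    {k l : ℕ} (hi : i ∈ Set.Icc 1 m) (hj : j ∈ Set.Icc 1 m) (hk : k ∈ Set.Icc 1 m)
    (hl : l ∈ Set.Icc 1 m) :
    ({𝐯 i, 𝐰 j} : Set (𝒜 → T)) = {𝐯 k, 𝐰 l} ↔ i = k ∧ j = l := by
  refine ⟨fun h => ?_, by rintro ⟨rfl, rfl⟩; rfl⟩
  rcases Set.pair_eq_pair_iff.1 h with ⟨hik, hjl⟩ | ⟨hil, -⟩
  · exact ⟨hd.2.1 i hi k hk (unitVal_injective ht hik),
      hd.2.2 j hj l hl (unitVal_injective ht hjl)⟩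
  · exact absurd hil (unitVal_ne_of_hamDistinctAtoms ht hd hi hl)

theorem hamD_self (a : 𝒜 → T) : hamD m p q t0 t1 a a = 0 := if_pos rfl

theorem hamD_p_p_lt (hi : i ∈ Set.Icc 1 m) (hj : j ∈ Set.Icc 1 m) :
    hamD m p q t0 t1 (𝐯 i) (𝐯 j) < ((2.3 : ℝ) : WithTop ℝ) := by
  by_cases h : 𝐯 i = 𝐯 j
  · rw [h, hamD_self]
    norm_num
  · rw [hamD, if_neg h, if_pos (Set.pair_subset_iff.2 ⟨p_mem_hamX hi, p_mem_hamX hj⟩),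
      if_pos (.inl ⟨i, hi, j, hj, rfl, rfl⟩)]
    norm_num

theorem hamD_q_q_lt (hi : i ∈ Set.Icc 1 m) (hj : j ∈ Set.Icc 1 m) :
    hamD m p q t0 t1 (𝐰 i) (𝐰 j) < ((2.3 : ℝ) : WithTop ℝ) :=
  hamD_swap (p := p) ▸ hamD_p_p_lt hi hj

theorem hamD_of_pair_eq (ht : t0 ≠ t1) (hd : hamDistinctAtoms m p q)
    (hi : i ∈ Set.Icc 1 m) (hj : j ∈ Set.Icc 1 m) (h : ({a, b} : Set (𝒜 → T)) = {𝐯 i, 𝐰 j}) :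
    hamD m p q t0 t1 a b =
      if i = j then ((2.4 : ℝ) : WithTop ℝ)
      else if CyclicAdj m i j then ((2.5 : ℝ) : WithTop ℝ) else ((2.2 : ℝ) : WithTop ℝ) := by
  classical
  have hne : a ≠ b := by
    rintro rfl
    have hv : 𝐯 i ∈ ({a, a} : Set (𝒜 → T)) := h ▸ Set.mem_insert _ _
    have hw : 𝐰 j ∈ ({a, a} : Set (𝒜 → T)) := h ▸ Set.mem_insert_of_mem _ rfl
    simp only [Set.pair_eq_singleton, Set.mem_singleton_iff] at hv hw
    exact unitVal_ne_of_hamDistinctAtoms ht hd hi hj (hv.trans hw.symm)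
  have hX : ({a, b} : Set (𝒜 → T)) ⊆ 𝐗 :=
    h ▸ Set.pair_subset_iff.2 ⟨p_mem_hamX hi, q_mem_hamX hj⟩
  have hsame : ¬ ((∃ k ∈ Set.Icc 1 m, ∃ l ∈ Set.Icc 1 m, a = 𝐯 k ∧ b = 𝐯 l) ∨
      ∃ k ∈ Set.Icc 1 m, ∃ l ∈ Set.Icc 1 m, a = 𝐰 k ∧ b = 𝐰 l) := by
    rintro (⟨k, hk, l, hl, rfl, rfl⟩ | ⟨k, hk, l, hl, rfl, rfl⟩)
    · rcases (h ▸ Set.mem_insert_of_mem _ rfl : 𝐰 j ∈ ({𝐯 k, 𝐯 l} : Set (𝒜 → T))) with h' | h'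
      · exact unitVal_ne_of_hamDistinctAtoms ht hd hk hj h'.symm
      · exact unitVal_ne_of_hamDistinctAtoms ht hd hl hj h'.symm
    · rcases (h ▸ Set.mem_insert _ _ : 𝐯 i ∈ ({𝐰 k, 𝐰 l} : Set (𝒜 → T))) with h' | h'
      · exact unitVal_ne_of_hamDistinctAtoms ht hd hi hk h'
      · exact unitVal_ne_of_hamDistinctAtoms ht hd hi hl h'
  have h24 : (∃ k ∈ Set.Icc 1 m, ({a, b} : Set (𝒜 → T)) = {𝐯 k, 𝐰 k}) ↔ i = j := by
    rw [h]
    refine ⟨fun ⟨k, hk, hk'⟩ => ?_, fun hij => ⟨i, hi, hij ▸ rfl⟩⟩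
    obtain ⟨rfl, rfl⟩ := (pair_eq_pair_iff_of_hamDistinctAtoms ht hd hi hj hk hk).1 hk'
    rfl
  have h25 : (∃ k ∈ Set.Icc 1 m, ∃ l ∈ Set.Icc 1 m,
      ({a, b} : Set (𝒜 → T)) = {𝐯 k, 𝐰 l} ∧ CyclicAdj m k l) ↔ CyclicAdj m i j := by
    rw [h]
    refine ⟨fun ⟨k, hk, l, hl, hkl, hadj⟩ => ?_, fun hadj => ⟨i, hi, j, hj, rfl, hadj⟩⟩
    obtain ⟨rfl, rfl⟩ := (pair_eq_pair_iff_of_hamDistinctAtoms ht hd hi hj hk hl).1 hkl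
    exact hadj
  rw [hamD, if_neg hne, if_pos hX, if_neg hsame]
  exact if_congr h24 rfl (if_congr h25 rfl rfl)

theorem three_le_hamD (hX : ¬ ({a, b} : Set (𝒜 → T)) ⊆ 𝐗)
    (h : ¬ (hamSet a b).Finite ∨ 3 ≤ (hamSet a b).ncard) :
    ((3 : ℝ) : WithTop ℝ) ≤ hamD m p q t0 t1 a b := by
  have hne : a ≠ b := by
    rintro rfl
    simp [hamSet_self] at h
  rw [hamD, if_neg hne, if_neg hX]
  split_ifs with hfin
  · have := h.resolve_left (not_not.2 hfin)
    omega
  · exact WithTop.coe_le_coe.2 (by exact_mod_cast h.resolve_left (not_not.2 hfin))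
  · exact le_top

theorem hamD_lt_of_ncard_lt (hX : ¬ ({a, b} : Set (𝒜 → T)) ⊆ 𝐗) (hfin : (hamSet a b).Finite)
    (h : (hamSet a b).ncard < 3) : hamD m p q t0 t1 a b < ((2.3 : ℝ) : WithTop ℝ) := by
  by_cases hab : a = b
  · rw [hab, hamD_self]
    norm_num
  rw [hamD, if_neg hab, if_neg hX, if_pos hfin]
  split_ifs
  · norm_num
  · have : ((hamSet a b).ncard : ℝ) ≤ 2 := by exact_mod_cast (by omega : (hamSet a b).ncard ≤ 2)
    exact WithTop.coe_lt_coe.2 (by linarith)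

theorem hamD_eq_and_hamD'_eq_of_ne (ht : t0 ≠ t1) (hd : hamDistinctAtoms m p q)
    (h : hamD' m p q t0 t1 r a b ≠ hamD m p q t0 t1 a b) :
    hamD m p q t0 t1 a b = ((2.4 : ℝ) : WithTop ℝ) ∧
      hamD' m p q t0 t1 r a b = ((2.3 : ℝ) : WithTop ℝ) := by
  classical
  by_cases hc : ∃ i ∈ Set.Icc (r + 1) m, ({a, b} : Set (𝒜 → T)) = {𝐯 i, 𝐰 i}
  · obtain ⟨i, hi, hab⟩ := hc
    have hi' : i ∈ Set.Icc 1 m := Set.Icc_subset_Icc_left (Nat.le_add_left 1 r) hi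
    exact ⟨by rw [hamD_of_pair_eq ht hd hi' hi' hab, if_pos rfl], if_pos ⟨i, hi, hab⟩⟩
  · exact absurd (if_neg hc) h

theorem hamD'_eq_of_not_subset (hX : ¬ ({a, b} : Set (𝒜 → T)) ⊆ 𝐗) :
    hamD' m p q t0 t1 r a b = hamD m p q t0 t1 a b := by
  refine if_neg ?_
  rintro ⟨i, hi, hab⟩
  have hi' : i ∈ Set.Icc 1 m := Set.Icc_subset_Icc_left (Nat.le_add_left 1 r) hi
  exact hX (hab ▸ Set.pair_subset_iff.2 ⟨p_mem_hamX hi', q_mem_hamX hi'⟩)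

theorem hamD'_p_q (ht : t0 ≠ t1) (hd : hamDistinctAtoms m p q)
    (hi : i ∈ Set.Icc 1 m) (hj : j ∈ Set.Icc 1 m) :
    hamD' m p q t0 t1 r (𝐯 i) (𝐰 j) =
      if i = j then (if r < i then ((2.3 : ℝ) : WithTop ℝ) else ((2.4 : ℝ) : WithTop ℝ))
      else if CyclicAdj m i j then ((2.5 : ℝ) : WithTop ℝ) else ((2.2 : ℝ) : WithTop ℝ) := by
  classical
  by_cases hc : ∃ k ∈ Set.Icc (r + 1) m,
      ({𝐯 i, 𝐰 j} : Set (𝒜 → T)) = {𝐯 k, 𝐰 k}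
  · obtain ⟨k, hk, hk'⟩ := hc
    have hk₁ : k ∈ Set.Icc 1 m := Set.Icc_subset_Icc_left (Nat.le_add_left 1 r) hk
    obtain ⟨rfl, rfl⟩ := (pair_eq_pair_iff_of_hamDistinctAtoms ht hd hi hj hk₁ hk₁).1 hk'
    rw [hamD', if_pos ⟨_, hk, hk'⟩, if_pos rfl, if_pos (show r < _ from hk.1)]
  · rw [hamD', if_neg hc, hamD_of_pair_eq ht hd hi hj rfl]
    split_ifs with hij hri
    · exact absurd ⟨i, ⟨hri, hi.2⟩, hij ▸ rfl⟩ hc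
    all_goals rfl

theorem exists_pair_eq_or_lt_hamD (ht : t0 ≠ t1) (hd : hamDistinctAtoms m p q)
    (hcase : ({a, b} : Set (𝒜 → T)) ⊆ 𝐗 ∨ (¬ (hamSet a b).Finite ∨ 3 ≤ (hamSet a b).ncard))
    (h : ((2.3 : ℝ) : WithTop ℝ) ≤ hamD m p q t0 t1 a b) :
    (∃ i ∈ Set.Icc 1 m, ({a, b} : Set (𝒜 → T)) = {𝐯 i, 𝐰 i}) ∨
      ((2.4 : ℝ) : WithTop ℝ) < hamD m p q t0 t1 a b := by
  have cross : ∀ i ∈ Set.Icc 1 m, ∀ j ∈ Set.Icc 1 m, ({a, b} : Set (𝒜 → T)) = {𝐯 i, 𝐰 j} →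
      (∃ i ∈ Set.Icc 1 m, ({a, b} : Set (𝒜 → T)) = {𝐯 i, 𝐰 i}) ∨
        ((2.4 : ℝ) : WithTop ℝ) < hamD m p q t0 t1 a b := by
    intro i hi j hj hab
    rw [hamD_of_pair_eq ht hd hi hj hab] at h ⊢
    split_ifs at h ⊢ with hij
    · exact .inl ⟨i, hi, hij ▸ hab⟩
    · exact .inr (by norm_num)
    · exact absurd h (by norm_num)
  by_cases hX : ({a, b} : Set (𝒜 → T)) ⊆ 𝐗
  · obtain ⟨⟨i, hi, rfl | rfl⟩, ⟨j, hj, rfl | rfl⟩⟩ := Set.pair_subset_iff.1 hX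
    · exact absurd h (hamD_p_p_lt hi hj).not_ge
    · exact cross i hi j hj rfl
    · exact cross j hj i hi (Set.pair_comm _ _)
    · exact absurd h (hamD_q_q_lt hi hj).not_ge
  · exact .inr ((WithTop.coe_lt_coe.2 (by norm_num)).trans_le
      (three_le_hamD hX (hcase.resolve_left hX)))

theorem eq_or_cyclicAdj_of_le_hamD (ht : t0 ≠ t1) (hd : hamDistinctAtoms m p q)
    (hi : i ∈ Set.Icc 1 m) (hj : j ∈ Set.Icc 1 m)
    (h : ((2.3 : ℝ) : WithTop ℝ) ≤ hamD m p q t0 t1 (𝐯 i) (𝐰 j)) : i = j ∨ CyclicAdj m i j := by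
  rw [hamD_of_pair_eq ht hd hi hj rfl] at h
  split_ifs at h with hij hadj
  exacts [.inl hij, .inr hadj, absurd h (by norm_num)]

variable {A B : Set (𝒜 → T)}

theorem cyclicAdj_and_inter_hamX_eq (ht : t0 ≠ t1) (hd : hamDistinctAtoms m p q) (hm : 4 ≤ m)
    (hlow : ∀ a ∈ A, ∀ b ∈ B, ((2.3 : ℝ) : WithTop ℝ) ≤ hamD m p q t0 t1 a b)
    (hj : j ∈ Set.Icc 1 m) (hi : i ∈ Set.Icc 1 m) (hji : j ≠ i)
    (hvj : 𝐯 j ∈ A) (hvi : 𝐯 i ∈ A) (hwj : 𝐰 j ∈ B) (hwi : 𝐰 i ∈ B) :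
    CyclicAdj m j i ∧ A ∩ 𝐗 = {𝐯 j, 𝐯 i} ∧ B ∩ 𝐗 = {𝐰 j, 𝐰 i} := by
  have near : ∀ k ∈ Set.Icc 1 m, ∀ l ∈ Set.Icc 1 m, 𝐯 k ∈ A → 𝐰 l ∈ B →
      k = l ∨ CyclicAdj m k l :=
    fun k hk l hl hvk hwl => eq_or_cyclicAdj_of_le_hamD ht hd hk hl (hlow _ hvk _ hwl)
  have hadj : CyclicAdj m j i := (near j hj i hi hvj hwi).resolve_left hji
  have between : ∀ k ∈ Set.Icc 1 m, k = j ∨ CyclicAdj m k j → k = i ∨ CyclicAdj m k i →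
      k = j ∨ k = i :=
    fun k hk => eq_or_eq_of_cyclicAdj hm hj hi hk hadj
  refine ⟨hadj, Set.Subset.antisymm ?_ ?_, Set.Subset.antisymm ?_ ?_⟩
  · rintro _ ⟨hxA, k, hk, rfl | rfl⟩
    · rcases between k hk (near k hk j hj hxA hwj) (near k hk i hi hxA hwi) with rfl | rfl
      exacts [.inl rfl, .inr rfl]
    · exact absurd (hlow _ hxA _ hwj) (hamD_q_q_lt hk hj).not_ge
  · rintro _ (rfl | rfl)
    exacts [⟨hvj, p_mem_hamX hj⟩, ⟨hvi, p_mem_hamX hi⟩]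
  · rintro _ ⟨hyB, k, hk, rfl | rfl⟩
    · exact absurd (hlow _ hvj _ hyB) (hamD_p_p_lt hj hk).not_ge
    · rcases between k hk ((near j hj k hk hvj hyB).imp Eq.symm CyclicAdj.symm)
        ((near i hi k hk hvi hyB).imp Eq.symm CyclicAdj.symm) with rfl | rfl
      exacts [.inl rfl, .inr rfl]
  · rintro _ (rfl | rfl)
    exacts [⟨hwj, q_mem_hamX hj⟩, ⟨hwi, q_mem_hamX hi⟩]

theorem inducedOp_hamD'_eq_singleton_q (ht : t0 ≠ t1) (hd : hamDistinctAtoms m p q)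
    (hcase : ∀ a ∈ A, ∀ b ∈ B, ({a, b} : Set (𝒜 → T)) ⊆ 𝐗 ∨
      (¬ (hamSet a b).Finite ∨ 3 ≤ (hamSet a b).ncard))
    {i₀ i₁ : ℕ} (hi₀ : 1 ≤ i₀) (hi₀r : i₀ ≤ r) (hri₁ : r < i₁) (hi₁m : i₁ ≤ m)
    (hadj : CyclicAdj m i₀ i₁) (hA : A ∩ 𝐗 = {𝐯 i₀, 𝐯 i₁}) (hB : B ∩ 𝐗 = {𝐰 i₀, 𝐰 i₁}) :
    inducedOp (· < ·) (hamD' m p q t0 t1 r) A B = {𝐰 i₁} := by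
  have hI₀ : i₀ ∈ Set.Icc 1 m := ⟨hi₀, by omega⟩
  have hI₁ : i₁ ∈ Set.Icc 1 m := ⟨by omega, hi₁m⟩
  have hvA : 𝐯 i₁ ∈ A := (hA.symm ▸ Set.mem_insert_of_mem _ rfl : 𝐯 i₁ ∈ A ∩ 𝐗).1
  have hwB : 𝐰 i₁ ∈ B := (hB.symm ▸ Set.mem_insert_of_mem _ rfl : 𝐰 i₁ ∈ B ∩ 𝐗).1
  have cross : ∀ j k, j = i₀ ∨ j = i₁ → k = i₀ ∨ k = i₁ →
      ((2.3 : ℝ) : WithTop ℝ) ≤ hamD' m p q t0 t1 r (𝐯 j) (𝐰 k) ∧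
        (hamD' m p q t0 t1 r (𝐯 j) (𝐰 k) = ((2.3 : ℝ) : WithTop ℝ) → 𝐰 k = 𝐰 i₁) := by
    rintro j k hj hk
    have hJ : j ∈ Set.Icc 1 m := by rcases hj with rfl | rfl <;> assumption
    have hK : k ∈ Set.Icc 1 m := by rcases hk with rfl | rfl <;> assumption
    rw [hamD'_p_q ht hd hJ hK]
    split_ifs with hjk hrj hjk'
    · exact ⟨le_rfl, fun _ => by congr 2; omega⟩
    · exact ⟨by norm_num, fun h => absurd h (by norm_num)⟩
    · exact ⟨by norm_num, fun h => absurd h (by norm_num)⟩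
    · unfold CyclicAdj at hadj hjk'
      omega
  refine inducedOp_eq_singleton (c := ((2.3 : ℝ) : WithTop ℝ)) hvA hwB ?_ fun a ha b hb => ?_
  · rw [hamD'_p_q ht hd hI₁ hI₁, if_pos rfl, if_pos hri₁]
  by_cases hX : ({a, b} : Set (𝒜 → T)) ⊆ 𝐗
  · obtain ⟨haX, hbX⟩ := Set.pair_subset_iff.1 hX
    rcases (hA ▸ ⟨ha, haX⟩ : a ∈ ({𝐯 i₀, 𝐯 i₁} : Set (𝒜 → T))) with rfl | rfl <;>
    rcases (hB ▸ ⟨hb, hbX⟩ : b ∈ ({𝐰 i₀, 𝐰 i₁} : Set (𝒜 → T))) with rfl | rfl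
    exacts [cross _ _ (.inl rfl) (.inl rfl), cross _ _ (.inl rfl) (.inr rfl),
      cross _ _ (.inr rfl) (.inl rfl), cross _ _ (.inr rfl) (.inr rfl)]
  · have h3 := three_le_hamD hX ((hcase a ha b hb).resolve_left hX)
    rw [← hamD'_eq_of_not_subset (r := r) hX] at h3
    exact ⟨(WithTop.coe_le_coe.2 (by norm_num)).trans h3,
      fun h => absurd (h ▸ h3) (not_le.2 (WithTop.coe_lt_coe.2 (by norm_num)))⟩

theorem inducedOp_hamD'_eq_singleton_p (ht : t0 ≠ t1) (hd : hamDistinctAtoms m p q)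
    (hcase : ∀ a ∈ A, ∀ b ∈ B, ({a, b} : Set (𝒜 → T)) ⊆ 𝐗 ∨
      (¬ (hamSet a b).Finite ∨ 3 ≤ (hamSet a b).ncard))
    {i₀ i₁ : ℕ} (hi₀ : 1 ≤ i₀) (hi₀r : i₀ ≤ r) (hri₁ : r < i₁) (hi₁m : i₁ ≤ m)
    (hadj : CyclicAdj m i₀ i₁) (hA : A ∩ 𝐗 = {𝐰 i₀, 𝐰 i₁}) (hB : B ∩ 𝐗 = {𝐯 i₀, 𝐯 i₁}) :
    inducedOp (· < ·) (hamD' m p q t0 t1 r) A B = {𝐯 i₁} := by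
  rw [← hamX_swap] at hcase hA hB
  rw [← hamD'_swap]
  exact inducedOp_hamD'_eq_singleton_q ht hd.swap hcase hi₀ hi₀r hri₁ hi₁m hadj hA hB

theorem inducedOp_hamD'_eq_of_exists_lt (ht : t0 ≠ t1) (hd : hamDistinctAtoms m p q)
    (h : ∃ a ∈ A, ∃ b ∈ B, hamD m p q t0 t1 a b < ((2.3 : ℝ) : WithTop ℝ)) :
    inducedOp (· < ·) (hamD' m p q t0 t1 r) A B = inducedOp (· < ·) (hamD m p q t0 t1) A B := by
  obtain ⟨a₀, ha₀, b₀, hb₀, hlt⟩ := h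
  refine (inducedOp_eq_of_lt ha₀ hb₀ ?_ hlt fun a _ b _ hne => ?_).symm
  · by_contra hne
    rw [(hamD_eq_and_hamD'_eq_of_ne ht hd (Ne.symm hne)).1] at hlt
    norm_num at hlt
  · obtain ⟨h₁, h₂⟩ := hamD_eq_and_hamD'_eq_of_ne ht hd (Ne.symm hne)
    rw [h₁, h₂]
    norm_num

theorem lt_of_pair_eq_of_forall_le (ht : t0 ≠ t1) (hd : hamDistinctAtoms m p q) (hm : 4 ≤ m)
    (hlow : ∀ a ∈ A, ∀ b ∈ B, ((2.3 : ℝ) : WithTop ℝ) ≤ hamD m p q t0 t1 a b)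
    (hspecial : ∀ j i, j = r ∧ i = r + 1 ∨ j = 1 ∧ i = m →
      ¬ (A ∩ 𝐗 = {𝐯 j, 𝐯 i} ∧ B ∩ 𝐗 = {𝐰 j, 𝐰 i}) ∧
        ¬ (A ∩ 𝐗 = {𝐰 j, 𝐰 i} ∧ B ∩ 𝐗 = {𝐯 j, 𝐯 i}))
    {a₂ b₂ : 𝒜 → T} (ha₂ : a₂ ∈ A) (hb₂ : b₂ ∈ B) (hi : i ∈ Set.Icc (r + 1) m)
    (hab₂ : ({a₂, b₂} : Set (𝒜 → T)) = {𝐯 i, 𝐰 i})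
    (ha : a ∈ A) (hb : b ∈ B) (hj : j ∈ Set.Icc 1 m)
    (hab : ({a, b} : Set (𝒜 → T)) = {𝐯 j, 𝐰 j}) : r < j := by
  by_contra! hjr
  have hi₁ : i ∈ Set.Icc 1 m := Set.Icc_subset_Icc_left (Nat.le_add_left 1 r) hi
  have hji : j ≠ i := by have := hi.1; omega
  rcases Set.pair_eq_pair_iff.1 hab with ⟨rfl, rfl⟩ | ⟨rfl, rfl⟩ <;>
    rcases Set.pair_eq_pair_iff.1 hab₂ with ⟨rfl, rfl⟩ | ⟨rfl, rfl⟩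
  · obtain ⟨hadj, hA, hB⟩ := cyclicAdj_and_inter_hamX_eq ht hd hm hlow hj hi₁ hji ha ha₂ hb hb₂
    exact (hspecial j i (cyclicAdj_crossing hj.1 hjr hi.1 hi.2 hadj)).1 ⟨hA, hB⟩
  · exact (hamD_p_p_lt hj hi₁).not_ge (hlow _ ha _ hb₂)
  · exact (hamD_q_q_lt hj hi₁).not_ge (hlow _ ha _ hb₂)
  · rw [← hamD_swap] at hlow
    obtain ⟨hadj, hA, hB⟩ :=
      cyclicAdj_and_inter_hamX_eq ht hd.swap hm hlow hj hi₁ hji ha ha₂ hb hb₂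
    rw [hamX_swap] at hA hB
    exact (hspecial j i (cyclicAdj_crossing hj.1 hjr hi.1 hi.2 hadj)).2 ⟨hA, hB⟩

theorem inducedOp_hamD'_eq_of_forall_le (ht : t0 ≠ t1) (hd : hamDistinctAtoms m p q)
    (hm : 4 ≤ m)
    (hcase : ∀ a ∈ A, ∀ b ∈ B, ({a, b} : Set (𝒜 → T)) ⊆ 𝐗 ∨
      (¬ (hamSet a b).Finite ∨ 3 ≤ (hamSet a b).ncard))
    (hlow : ∀ a ∈ A, ∀ b ∈ B, ((2.3 : ℝ) : WithTop ℝ) ≤ hamD m p q t0 t1 a b)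
    (hspecial : ∀ j i, j = r ∧ i = r + 1 ∨ j = 1 ∧ i = m →
      ¬ (A ∩ 𝐗 = {𝐯 j, 𝐯 i} ∧ B ∩ 𝐗 = {𝐰 j, 𝐰 i}) ∧
        ¬ (A ∩ 𝐗 = {𝐰 j, 𝐰 i} ∧ B ∩ 𝐗 = {𝐯 j, 𝐯 i})) :
    inducedOp (· < ·) (hamD' m p q t0 t1 r) A B = inducedOp (· < ·) (hamD m p q t0 t1) A B := by
  by_cases hch : ∀ a ∈ A, ∀ b ∈ B, hamD' m p q t0 t1 r a b = hamD m p q t0 t1 a b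
  · exact inducedOp_congr hch
  push Not at hch
  obtain ⟨a₂, ha₂, b₂, hb₂, hne₂⟩ := hch
  obtain ⟨i, hi, hab₂⟩ : ∃ i ∈ Set.Icc (r + 1) m, ({a₂, b₂} : Set (𝒜 → T)) = {𝐯 i, 𝐰 i} := by
    by_contra hc
    exact hne₂ (if_neg hc)
  have h24 : ∀ a ∈ A, ∀ b ∈ B, ((2.4 : ℝ) : WithTop ℝ) ≤ hamD m p q t0 t1 a b := by
    intro a ha b hb
    rcases exists_pair_eq_or_lt_hamD ht hd (hcase a ha b hb) (hlow a ha b hb) with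
      ⟨j, hj, hab⟩ | hgt
    · rw [hamD_of_pair_eq ht hd hj hj hab, if_pos rfl]
    · exact hgt.le
  refine inducedOp_comp_of_strictMonoOn
    (strictMonoOn_ite_eq (x₀ := ((2.4 : ℝ) : WithTop ℝ)) (y := ((2.3 : ℝ) : WithTop ℝ))
      (by rintro _ ⟨a, ha, b, hb, rfl⟩; exact h24 a ha b hb) (by norm_num)) fun a ha b hb => ?_
  split_ifs with h
  · rcases exists_pair_eq_or_lt_hamD ht hd (hcase a ha b hb) (hlow a ha b hb) with
      ⟨j, hj, hab⟩ | hgt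
    · exact if_pos ⟨j, ⟨lt_of_pair_eq_of_forall_le ht hd hm hlow hspecial ha₂ hb₂ hi hab₂
        ha hb hj hab, hj.2⟩, hab⟩
    · exact absurd h hgt.ne'
  · by_contra hne
    exact h (hamD_eq_and_hamD'_eq_of_ne ht hd hne).1

end Distance

theorem stmt10_general {𝒜 T : Type*}
    (t0 t1 : T) (ht : t0 ≠ t1)
    (m : ℕ) (hm : 4 ≤ m) (p q : ℕ → 𝒜) (hdist : hamDistinctAtoms m p q)
    (r : ℕ) (hr : r ∈ Set.Icc 1 (m - 1)) :
    ∀ A B : Set (𝒜 → T),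
      hamOp' m p q t0 t1 r A B = inducedOp (· < ·) (hamD' m p q t0 t1 r) A B := by
  obtain ⟨hr₁, hrm⟩ : 1 ≤ r ∧ r < m := ⟨hr.1, by have := hr.2; omega⟩
  have hadj_r : CyclicAdj m r (r + 1) := .inl (by omega)
  have hadj_1 : CyclicAdj m 1 m := .inr (by omega)
  intro A B
  symm
  unfold hamOp' hamOp
  split_ifs with hcase h₁ h₂ h₃ h₄
  · exact inducedOp_hamD'_eq_singleton_q ht hdist hcase hr₁ le_rfl (by omega) hrm hadj_r h₁.1 h₁.2
  · exact inducedOp_hamD'_eq_singleton_p ht hdist hcase hr₁ le_rfl (by omega) hrm hadj_r h₂.1 h₂.2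
  · exact inducedOp_hamD'_eq_singleton_q ht hdist hcase le_rfl hr₁ hrm le_rfl hadj_1
      (h₃.1.trans (Set.pair_comm _ _)) (h₃.2.trans (Set.pair_comm _ _))
  · exact inducedOp_hamD'_eq_singleton_p ht hdist hcase le_rfl hr₁ hrm le_rfl hadj_1
      (h₄.1.trans (Set.pair_comm _ _)) (h₄.2.trans (Set.pair_comm _ _))
  · by_cases hlow : ∃ a ∈ A, ∃ b ∈ B, hamD m p q t0 t1 a b < ((2.3 : ℝ) : WithTop ℝ)
    · exact inducedOp_hamD'_eq_of_exists_lt ht hdist hlow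
    push Not at hlow
    refine inducedOp_hamD'_eq_of_forall_le ht hdist hm hcase hlow ?_
    rintro j i (⟨rfl, rfl⟩ | ⟨rfl, rfl⟩)
    · exact ⟨h₁, h₂⟩
    · simpa only [Set.pair_comm (unitVal t0 t1 (p 1)), Set.pair_comm (unitVal t0 t1 (q 1))]
        using ⟨h₃, h₄⟩
  · push Not at hcase
    obtain ⟨a, ha, b, hb, hX, hfin, h3⟩ := hcase
    exact inducedOp_hamD'_eq_of_exists_lt ht hdist ⟨a, ha, b, hb, hamD_lt_of_ncard_lt hX hfin h3⟩

/-- The `r`-modification of the modified Hamming Hamster-Wheel operator is induced by the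
`r`-modification of the Hamming Hamster-Wheel pseudo-distance. -/
theorem stmt10 {𝒜 T : Type*} [Countable 𝒜] [Infinite 𝒜]
    (t0 t1 : T) (ht : t0 ≠ t1)
    (m : ℕ) (hm : 4 ≤ m) (p q : ℕ → 𝒜) (hdist : hamDistinctAtoms m p q)
    (r : ℕ) (hr : r ∈ Set.Icc 1 (m - 1)) :
    ∀ A B : Set (𝒜 → T),
      hamOp' m p q t0 t1 r A B = inducedOp (· < ·) (hamD' m p q t0 t1 r) A B :=
  stmt10_general t0 t1 ht m hm p q hdist r hr
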